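/- Vanishing boundary term: assume moreover that E[e^{θ ξ_0}] < ∞ and E[e^{θ M_0}] < ∞ for some θ > 0, and for n ∈ ℕ let k(n) := max{k ≥ 0 : τ_k ≤ n}. Then the remainder of the ergodic average after the last completed cycle vanishes: (1/n) Σ_{j=τ_{k(n)}+1}^{n} X_j → 0 almost surely and in L² as n → ∞. -/

import Mathlib

open MeasureTheory Filter ProbabilityTheory

/-!
Almost surely the remainder sum is at most `B_{k(n)}`, where `B_k = ξ_k M_k` dominates the sum
over any initial piece of the `k`-th cycle, and `k(n) ≤ n`, `k(n) → ∞`. The `B_k` are identically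
distributed, and the exponential moments give `E[B_0²] < ∞`. Borel–Cantelli with
`∑ P(|B_k| > εk) ≤ E|B_0|/ε + 1` gives `B_k / k → 0` a.s., hence `B_{k(n)} / n → 0`; in `L²`,
`E[(B_{k(n)} / n)²] ≤ n⁻² ∑_{k ≤ n} E[B_k²] = (n + 1) E[B_0²] / n²`.
-/

lemma pow_le_factorial_div_pow_mul_exp {θ x : ℝ} (hθ : 0 < θ) (hx : 0 ≤ x) (n : ℕ) :
    x ^ n ≤ n.factorial / θ ^ n * Real.exp (θ * x) := by
  have h := Real.pow_div_factorial_le_exp _ (mul_nonneg hθ.le hx) n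
  rw [div_le_iff₀ (by positivity), mul_pow] at h
  rw [div_mul_eq_mul_div, le_div_iff₀ (by positivity)]
  linarith

-- The product `ξ * M` of the length and the maximum of an encoded cycle `(ξ, x)`.
noncomputable def cycleBound (c : ℕ × (ℕ → ℝ)) : ℝ := c.1 * sSup (c.2 '' Set.Iio c.1)

lemma measurable_cycleBound : Measurable cycleBound := by
  have h : Measurable fun q : (ℕ → ℝ) × ℕ => (q.2 : ℝ) * sSup (q.1 '' Set.Iio q.2) := by
    refine measurable_from_prod_countable_left fun m => ?_
    rcases Nat.eq_zero_or_pos m with rfl | hm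
    · simp
    · have hne : (Finset.range m).Nonempty := ⟨0, Finset.mem_range.mpr hm⟩
      have heq : ∀ x : ℕ → ℝ,
          sSup (x '' Set.Iio m) = (Finset.range m).sup' hne (fun i (x : ℕ → ℝ) => x i) x := by
        intro x
        rw [Finset.sup'_apply, Finset.sup'_eq_csSup_image, Finset.coe_range]
      simp_rw [heq]
      exact measurable_const.mul (Finset.measurable_sup' hne fun i _ => measurable_pi_apply i)
  exact h.comp measurable_swap

lemma cycleBound_eq (x : ℕ → ℝ) (a b : ℕ) :
    cycleBound (b - a, fun j => if j < b - a then x (a + 1 + j) else 0)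
      = ((b - a : ℕ) : ℝ) * sSup (x '' Set.Icc (a + 1) b) := by
  unfold cycleBound
  congr 2
  ext y
  simp only [Set.mem_image, Set.mem_Iio, Set.mem_Icc]
  constructor
  · rintro ⟨j, hj, rfl⟩
    exact ⟨a + 1 + j, ⟨by omega, by omega⟩, (if_pos hj).symm⟩
  · rintro ⟨i, ⟨hi₁, hi₂⟩, rfl⟩
    refine ⟨i - (a + 1), by omega, ?_⟩
    rw [if_pos (by omega)]
    congr 1
    omega

lemma sum_Icc_le_mul_sSup {x : ℕ → ℝ} (hx : ∀ j, 0 ≤ x j) {a b n : ℕ} (hn : n < b) :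
    ∑ j ∈ Finset.Icc (a + 1) n, x j ≤ ((b - a : ℕ) : ℝ) * sSup (x '' Set.Icc (a + 1) b) := by
  have hM : 0 ≤ sSup (x '' Set.Icc (a + 1) b) :=
    Real.sSup_nonneg (by rintro _ ⟨j, -, rfl⟩; exact hx j)
  calc ∑ j ∈ Finset.Icc (a + 1) n, x j
      ≤ (Finset.Icc (a + 1) n).card • sSup (x '' Set.Icc (a + 1) b) := by
        refine Finset.sum_le_card_nsmul _ _ _ fun j hj => ?_
        rw [Finset.mem_Icc] at hj
        exact le_csSup ((Set.finite_Icc _ _).image _).bddAbove ⟨j, ⟨hj.1, by omega⟩, rfl⟩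
    _ ≤ ((b - a : ℕ) : ℝ) * sSup (x '' Set.Icc (a + 1) b) := by
        rw [Nat.card_Icc, nsmul_eq_mul]
        gcongr <;> omega

namespace StrictMono

variable {f : ℕ → ℕ} (hf : StrictMono f) {n : ℕ}
include hf

lemma bddAbove_setOf_apply_le : BddAbove {k | f k ≤ n} :=
  ⟨n, fun k hk => (hf.id_le k).trans hk⟩

lemma apply_sSup_setOf_apply_le (h0 : f 0 ≤ n) : f (sSup {k | f k ≤ n}) ≤ n :=
  Nat.sSup_mem ⟨0, h0⟩ hf.bddAbove_setOf_apply_le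

lemma sSup_setOf_apply_le_le (h0 : f 0 ≤ n) : sSup {k | f k ≤ n} ≤ n :=
  (hf.id_le _).trans (hf.apply_sSup_setOf_apply_le h0)

lemma le_sSup_setOf_apply_le {k : ℕ} (hk : f k ≤ n) : k ≤ sSup {k | f k ≤ n} :=
  le_csSup hf.bddAbove_setOf_apply_le hk

lemma lt_apply_sSup_setOf_apply_le_add_one : n < f (sSup {k | f k ≤ n} + 1) := by
  by_contra! h
  have := hf.le_sSup_setOf_apply_le h
  omega

lemma tendsto_sSup_setOf_apply_le : Tendsto (fun n => sSup {k | f k ≤ n}) atTop atTop :=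
  tendsto_atTop_atTop.mpr fun k => ⟨f k, fun _ hn => hf.le_sSup_setOf_apply_le hn⟩

end StrictMono

lemma tendsto_one_div_mul_of_abs_le {a s : ℕ → ℝ} {K : ℕ → ℕ}
    (ha : Tendsto (fun k => a k / k) atTop (nhds 0)) (hK : Tendsto K atTop atTop)
    (hKn : ∀ n, K n ≤ n) (hs : ∀ n, |s n| ≤ |a (K n)|) :
    Tendsto (fun n : ℕ => 1 / (n : ℝ) * s n) atTop (nhds 0) := by
  refine squeeze_zero_norm' ?_ (by simpa using (ha.comp hK).abs)
  filter_upwards [hK.eventually_gt_atTop 0] with n hn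
  rw [Real.norm_eq_abs, abs_mul, abs_div, abs_div, Nat.abs_cast, Nat.abs_cast, abs_one,
    one_div_mul_eq_div]
  calc |s n| / n ≤ |a (K n)| / n := div_le_div_of_nonneg_right (hs n) n.cast_nonneg
    _ ≤ |a (K n)| / K n := by gcongr; exact_mod_cast hKn n

section

variable {Ω : Type*} {m0 : MeasurableSpace Ω} {μ : Measure Ω}

lemma integrable_sq_mul_of_integrable_exp {f g : Ω → ℝ}
    (hfg : AEStronglyMeasurable (fun ω => f ω * g ω) μ) (hf : ∀ᵐ ω ∂μ, 0 ≤ f ω)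
    (hg : ∀ᵐ ω ∂μ, 0 ≤ g ω) {θ : ℝ} (hθ : 0 < θ)
    (hef : Integrable (fun ω => Real.exp (θ * f ω)) μ)
    (heg : Integrable (fun ω => Real.exp (θ * g ω)) μ) :
    Integrable (fun ω => (f ω * g ω) ^ 2) μ := by
  refine ((hef.add heg).const_mul (Nat.factorial 4 / θ ^ 4)).mono' (hfg.pow 2) ?_
  filter_upwards [hf, hg] with ω hfω hgω
  rw [Real.norm_eq_abs, abs_of_nonneg (sq_nonneg _), Pi.add_apply, mul_add]
  calc (f ω * g ω) ^ 2 ≤ f ω ^ 4 + g ω ^ 4 := by nlinarith [sq_nonneg (f ω ^ 2 - g ω ^ 2)]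
    _ ≤ _ := add_le_add (pow_le_factorial_div_pow_mul_exp hθ hfω 4)
        (pow_le_factorial_div_pow_mul_exp hθ hgω 4)

variable {Y : ℕ → Ω → ℝ}

lemma tendsto_integral_sq_one_div_mul_of_abs_le (hY : ∀ k, IdentDistrib (Y k) (Y 0) μ μ)
    (hY0 : Integrable (fun ω => Y 0 ω ^ 2) μ) {K : ℕ → Ω → ℕ} {s : ℕ → Ω → ℝ}
    (hs : ∀ n, ∀ᵐ ω ∂μ, K n ω ≤ n ∧ |s n ω| ≤ |Y (K n ω) ω|) :
    Tendsto (fun n : ℕ => ∫ ω, (1 / (n : ℝ) * s n ω) ^ 2 ∂μ) atTop (nhds 0) := by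
  have hYsq : ∀ k, IdentDistrib (fun ω => Y k ω ^ 2) (fun ω => Y 0 ω ^ 2) μ μ := fun k =>
    (hY k).comp (measurable_id.pow_const 2)
  have hYk : ∀ k, Integrable (fun ω => Y k ω ^ 2) μ := fun k => (hYsq k).integrable_iff.mpr hY0
  have hbound : ∀ n : ℕ, ∫ ω, (1 / (n : ℝ) * s n ω) ^ 2 ∂μ
      ≤ (1 / (n : ℝ)) ^ 2 * ((n + 1) * ∫ ω, Y 0 ω ^ 2 ∂μ) := by
    intro n
    have hpt : ∀ᵐ ω ∂μ, (1 / (n : ℝ) * s n ω) ^ 2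
        ≤ (1 / (n : ℝ)) ^ 2 * ∑ k ∈ Finset.range (n + 1), Y k ω ^ 2 := by
      filter_upwards [hs n] with ω ⟨hKn, hsω⟩
      rw [mul_pow]
      gcongr
      calc s n ω ^ 2 ≤ Y (K n ω) ω ^ 2 := sq_le_sq.mpr hsω
        _ ≤ _ := Finset.single_le_sum (f := fun k => Y k ω ^ 2) (fun k _ => sq_nonneg _)
          (Finset.mem_range.mpr (by omega))
    refine (integral_mono_of_nonneg (ae_of_all _ fun ω => sq_nonneg _)
      ((integrable_finsetSum _ fun k _ => hYk k).const_mul _) hpt).trans_eq ?_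
    rw [integral_const_mul, integral_finsetSum _ fun k _ => hYk k,
      Finset.sum_congr rfl fun k _ => (hYsq k).integral_eq]
    simp
  refine squeeze_zero (fun n => integral_nonneg fun ω => sq_nonneg _) hbound ?_
  have hrate : ∀ n : ℕ, (1 / (n : ℝ)) ^ 2 * (n + 1) = 1 / n * (1 + 1 / n) := by
    intro n
    rcases n.eq_zero_or_pos with rfl | hn
    · simp
    · field_simp
  simp_rw [← mul_assoc, hrate]
  have h := tendsto_one_div_atTop_nhds_zero_nat (𝕜 := ℝ)
  simpa using (h.mul (h.const_add 1)).mul_const (∫ ω, Y 0 ω ^ 2 ∂μ)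

variable [IsProbabilityMeasure μ]

lemma ae_eventually_abs_le_mul_of_identDistrib (hY : ∀ k, IdentDistrib (Y k) (Y 0) μ μ)
    (hint : Integrable (Y 0) μ) {ε : ℝ} (hε : 0 < ε) :
    ∀ᵐ ω ∂μ, ∀ᶠ k : ℕ in atTop, |Y k ω| ≤ ε * k := by
  -- the strong-law estimate is stated for the ambient `ℙ`; we take `ℙ := μ`
  have hsum := @tsum_prob_mem_Ioi_lt_top Ω ⟨μ⟩ _ (fun ω => |Y 0 ω| / ε)
    (hint.abs.div_const ε) (fun ω => by positivity)
  have hmeas : Measurable fun y : ℝ => |y| / ε := by fun_prop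
  have heq : ∀ k : ℕ,
      μ {ω | |Y k ω| / ε ∈ Set.Ioi (k : ℝ)} = μ {ω | |Y 0 ω| / ε ∈ Set.Ioi (k : ℝ)} :=
    fun k => ((hY k).comp hmeas).measure_mem_eq measurableSet_Ioi
  simp_rw [← heq] at hsum
  filter_upwards [ae_eventually_notMem hsum.ne] with ω hω
  filter_upwards [hω] with k hk
  rw [Set.mem_Ioi, not_lt, div_le_iff₀ hε] at hk
  linarith

lemma ae_tendsto_div_of_identDistrib (hY : ∀ k, IdentDistrib (Y k) (Y 0) μ μ)
    (hint : Integrable (Y 0) μ) :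
    ∀ᵐ ω ∂μ, Tendsto (fun k : ℕ => Y k ω / k) atTop (nhds 0) := by
  have h := ae_all_iff.mpr fun m : ℕ =>
    ae_eventually_abs_le_mul_of_identDistrib hY hint (Nat.one_div_pos_of_nat (n := m))
  filter_upwards [h] with ω hω
  refine Metric.tendsto_atTop.mpr fun ε hε => ?_
  obtain ⟨m, hm⟩ := exists_nat_one_div_lt hε
  obtain ⟨K, hK⟩ := eventually_atTop.mp ((hω m).and (eventually_gt_atTop 0))
  refine ⟨K, fun k hk => ?_⟩
  obtain ⟨hle, hpos⟩ := hK k hk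
  have hk0 : (0 : ℝ) < k := by exact_mod_cast hpos
  rw [Real.dist_eq, sub_zero, abs_div, Nat.abs_cast, div_lt_iff₀ hk0]
  nlinarith

end

theorem stmt_14_general
    {Ω : Type*} {m0 : MeasurableSpace Ω} {μ : Measure Ω} [IsProbabilityMeasure μ]
    (X : ℕ → Ω → ℝ) (τ : ℕ → Ω → ℕ)
    (hXnonneg : ∀ n, ∀ᵐ ω ∂μ, 0 ≤ X n ω)
    (hτ0 : ∀ ω, τ 0 ω = 0)
    (hτmono : ∀ᵐ ω ∂μ, ∀ k, τ k ω < τ (k + 1) ω)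
    (C : ℕ → Ω → ℕ × (ℕ → ℝ))
    (hC : ∀ k ω, C k ω = (τ (k + 1) ω - τ k ω,
      fun j => if j < τ (k + 1) ω - τ k ω then X (τ k ω + 1 + j) ω else 0))
    (hident : ∀ k, ProbabilityTheory.IdentDistrib (C k) (C 0) μ μ)
    (θ : ℝ) (hθ : 0 < θ)
    (hexpξ : Integrable (fun ω => Real.exp (θ * ((τ 1 ω - τ 0 ω : ℕ) : ℝ))) μ)
    (hexpM : Integrable (fun ω =>
      Real.exp (θ * sSup ((fun j => X j ω) '' Set.Icc (τ 0 ω + 1) (τ 1 ω)))) μ)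
    (kn : ℕ → Ω → ℕ)
    (hkn : ∀ n ω, kn n ω = sSup {k : ℕ | τ k ω ≤ n}) :
    (∀ᵐ ω ∂μ, Tendsto
      (fun n : ℕ => (1 / (n : ℝ)) * ∑ j ∈ Finset.Icc (τ (kn n ω) ω + 1) n, X j ω)
      atTop (nhds 0)) ∧
    Tendsto (fun n : ℕ =>
        ∫ ω, ((1 / (n : ℝ)) * ∑ j ∈ Finset.Icc (τ (kn n ω) ω + 1) n, X j ω) ^ 2 ∂μ)
      atTop (nhds 0) := by
  set B : ℕ → Ω → ℝ := fun k ω => cycleBound (C k ω) with hB_def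
  have hB : ∀ k ω, B k ω = ((τ (k + 1) ω - τ k ω : ℕ) : ℝ) *
      sSup ((fun j => X j ω) '' Set.Icc (τ k ω + 1) (τ (k + 1) ω)) := fun k ω => by
    simp only [hB_def, hC]
    exact cycleBound_eq (fun j => X j ω) _ _
  have hB_ident : ∀ k, IdentDistrib (B k) (B 0) μ μ :=
    fun k => (hident k).comp measurable_cycleBound
  have hX : ∀ᵐ ω ∂μ, ∀ n, 0 ≤ X n ω := ae_all_iff.mpr hXnonneg
  have hB_sq : Integrable (fun ω => B 0 ω ^ 2) μ := by
    have hmeas := (hB_ident 0).aemeasurable_fst.aestronglyMeasurable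
    rw [show B 0 = _ from funext (hB 0)] at hmeas
    simp only [hB, zero_add] at hmeas ⊢
    refine integrable_sq_mul_of_integrable_exp hmeas (ae_of_all _ fun ω => Nat.cast_nonneg _)
      ?_ hθ hexpξ hexpM
    filter_upwards [hX] with ω hXω
    exact Real.sSup_nonneg (by rintro _ ⟨j, -, rfl⟩; exact hXω j)
  have hB_int : Integrable (B 0) μ :=
    ((memLp_two_iff_integrable_sq (hB_ident 0).aemeasurable_fst.aestronglyMeasurable).mpr
      hB_sq).integrable one_le_two
  have hbound : ∀ᵐ ω ∂μ, Tendsto (kn · ω) atTop atTop ∧ ∀ n, kn n ω ≤ n ∧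
      |∑ j ∈ Finset.Icc (τ (kn n ω) ω + 1) n, X j ω| ≤ |B (kn n ω) ω| := by
    filter_upwards [hτmono, hX] with ω hmono hXω
    have hf : StrictMono (τ · ω) := strictMono_nat_of_lt_succ hmono
    have h0 : ∀ n, τ 0 ω ≤ n := fun n => (hτ0 ω).trans_le n.zero_le
    simp only [hkn]
    refine ⟨hf.tendsto_sSup_setOf_apply_le, fun n => ⟨hf.sSup_setOf_apply_le_le (h0 n), ?_⟩⟩
    rw [abs_of_nonneg (Finset.sum_nonneg fun j _ => hXω j), hB]
    exact (sum_Icc_le_mul_sSup hXω hf.lt_apply_sSup_setOf_apply_le_add_one).trans (le_abs_self _)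
  refine ⟨?_, tendsto_integral_sq_one_div_mul_of_abs_le hB_ident hB_sq
    fun n => hbound.mono fun ω h => h.2 n⟩
  filter_upwards [ae_tendsto_div_of_identDistrib hB_ident hB_int, hbound] with ω hω ⟨hK, hs⟩
  exact tendsto_one_div_mul_of_abs_le hω hK (fun n => (hs n).1) fun n => (hs n).2

theorem stmt_14
    {Ω : Type*} {m0 : MeasurableSpace Ω} {μ : Measure Ω} [IsProbabilityMeasure μ]
    (X : ℕ → Ω → ℝ) (τ : ℕ → Ω → ℕ)
    (hXmeas : ∀ n, Measurable (X n)) (hτmeas : ∀ k, Measurable (τ k))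
    (hXnonneg : ∀ n, ∀ᵐ ω ∂μ, 0 ≤ X n ω)
    (hτ0 : ∀ ω, τ 0 ω = 0)
    (hτmono : ∀ᵐ ω ∂μ, ∀ k, τ k ω < τ (k + 1) ω)
    (C : ℕ → Ω → ℕ × (ℕ → ℝ))
    (hC : ∀ k ω, C k ω = (τ (k + 1) ω - τ k ω,
      fun j => if j < τ (k + 1) ω - τ k ω then X (τ k ω + 1 + j) ω else 0))
    (hiid : ProbabilityTheory.iIndepFun C μ)
    (hident : ∀ k, ProbabilityTheory.IdentDistrib (C k) (C 0) μ μ)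
    (θ : ℝ) (hθ : 0 < θ)
    (hexpξ : Integrable (fun ω => Real.exp (θ * ((τ 1 ω - τ 0 ω : ℕ) : ℝ))) μ)
    (hexpM : Integrable (fun ω =>
      Real.exp (θ * sSup ((fun j => X j ω) '' Set.Icc (τ 0 ω + 1) (τ 1 ω)))) μ)
    (kn : ℕ → Ω → ℕ)
    (hkn : ∀ n ω, kn n ω = sSup {k : ℕ | τ k ω ≤ n}) :
    (∀ᵐ ω ∂μ, Tendsto
      (fun n : ℕ => (1 / (n : ℝ)) * ∑ j ∈ Finset.Icc (τ (kn n ω) ω + 1) n, X j ω)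
      atTop (nhds 0)) ∧
    Tendsto (fun n : ℕ =>
        ∫ ω, ((1 / (n : ℝ)) * ∑ j ∈ Finset.Icc (τ (kn n ω) ω + 1) n, X j ω) ^ 2 ∂μ)
      atTop (nhds 0) :=
  stmt_14_general (m0 := m0) X τ hXnonneg hτ0 hτmono C hC hident θ hθ hexpξ hexpM kn hkn
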